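/- arXiv:1606.06576 — 4 statements merged into one kernel-verified Lean document; each statement's English description precedes it below -/
import Mathlib

section
/- For any real numbers a with 0 ≤ a ≤ 1, any positive integer M, and any ρ with 0 ≤ ρ ≤ 1, one has 1 − (1 − a)^M ≤ (M·a)^ρ. -/
theorem gallager_union_bound (a : ℝ) (ha0 : 0 ≤ a) (ha1 : a ≤ 1)
    (M : ℕ) (hM : 0 < M) (ρ : ℝ) (hρ0 : 0 ≤ ρ) (hρ1 : ρ ≤ 1) :
    1 - (1 - a) ^ M ≤ ((M : ℝ) * a) ^ ρ := by
  have hMa : 0 ≤ (M : ℝ) * a := by positivity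
  rcases le_or_gt 1 ((M : ℝ) * a) with h | h
  · calc 1 - (1 - a) ^ M ≤ 1 := by
          have : 0 ≤ (1 - a) ^ M := pow_nonneg (by linarith) M
          linarith
      _ ≤ ((M : ℝ) * a) ^ ρ := Real.one_le_rpow h hρ0
  · -- Bernoulli: 1 - M*a ≤ (1-a)^M
    have hb : 1 + (M : ℝ) * (-a) ≤ (1 + (-a)) ^ M :=
      one_add_mul_le_pow (by linarith) M
    have h1 : 1 - (1 - a) ^ M ≤ (M : ℝ) * a := by
      have : (1 : ℝ) + (-a) = 1 - a := by ring
      rw [this] at hb; linarith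
    rcases eq_or_lt_of_le hMa with h0 | h0
    · have : 1 - (1 - a) ^ M ≤ 0 := by linarith [h1, h0.symm]
      exact this.trans (Real.rpow_nonneg hMa ρ)
    · calc 1 - (1 - a) ^ M ≤ (M : ℝ) * a := h1
        _ = ((M : ℝ) * a) ^ (1 : ℝ) := (Real.rpow_one _).symm
        _ ≤ ((M : ℝ) * a) ^ ρ :=
          Real.rpow_le_rpow_of_exponent_ge h0 h.le hρ1
end

section
/- Let s: [0,1) → ℝ^N be measurable with ‖s(u)‖ = r for all u (r > 0), and fix θ ∈ (0, π/2). Then there exists a unit vector g ∈ ℝ^N such that the Lebesgue measure of {u ∈ [0,1) : ⟨s(u), g⟩ ≥ r·cos θ} is at least A_N(θ)/A_N(π), where A_N(θ) is the surface area of a spherical cap of half-angle θ on the unit sphere in ℝ^N and A_N(π) is the total surface area of the sphere. -/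
/-!
Integrate `g ↦ |{u ∈ [0,1) : ⟪s u, g⟫ ≥ r cos θ}|` against the surface measure `σ` and swap the
integrals (Tonelli): each `u` contributes the `σ`-measure of the cap of half-angle `θ` around
`s u / r`, which by rotation invariance of `σ` is the `σ`-measure of the cap around `e`. Hence the
`σ`-average of the integrand is `σ(cap) / σ(sphere)`, and some `g` attains at least the average.
Rotation invariance of `σ` is inherited from Lebesgue measure, since `σ S` is a multiple of the
volume of the cone `(0,1) • S`.
-/

open MeasureTheory Set Metric Real Pointwise ENNReal

section Sphere

variable {E : Type*} [NormedAddCommGroup E] [InnerProductSpace ℝ E]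

def sphereCap (v : E) (c : ℝ) : Set (sphere (0 : E) 1) :=
  {x | c ≤ inner ℝ (x : E) v}

theorem sphereCap_smul {r : ℝ} (hr : 0 < r) (v : E) (c : ℝ) :
    sphereCap (r • v) (r * c) = sphereCap v c := by
  ext x
  simp only [sphereCap, mem_ofPred_eq, real_inner_smul_right, mul_le_mul_iff_right₀ hr]

theorem measurableSet_sphereCap [MeasurableSpace E] [OpensMeasurableSpace E] (v : E) (c : ℝ) :
    MeasurableSet (sphereCap v c) :=
  measurableSet_le measurable_const (continuous_subtype_val.inner continuous_const).measurable

namespace LinearIsometryEquiv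

def sphereMap (f : E ≃ₗᵢ[ℝ] E) : sphere (0 : E) 1 → sphere (0 : E) 1 :=
  fun x => ⟨f x, by simp⟩

theorem continuous_sphereMap (f : E ≃ₗᵢ[ℝ] E) : Continuous f.sphereMap :=
  (f.continuous.comp continuous_subtype_val).subtype_mk _

theorem image_val_preimage_sphereMap (f : E ≃ₗᵢ[ℝ] E) (S : Set (sphere (0 : E) 1)) :
    (↑) '' (f.sphereMap ⁻¹' S) = f ⁻¹' ((↑) '' S) := by
  ext y
  constructor
  · rintro ⟨x, hx, rfl⟩
    exact ⟨_, hx, rfl⟩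
  · rintro ⟨⟨_, hfy⟩, hS, rfl⟩
    exact ⟨⟨y, by simpa using hfy⟩, hS, rfl⟩

theorem smul_preimage (f : E ≃ₗᵢ[ℝ] E) (A : Set ℝ) (T : Set E) :
    A • f ⁻¹' T = f ⁻¹' (A • T) := by
  ext y
  simp only [Set.mem_smul, Set.mem_preimage]
  constructor
  · rintro ⟨t, ht, x, hx, rfl⟩
    exact ⟨t, ht, f x, hx, by simp⟩
  · rintro ⟨t, ht, x, hx, hxy⟩
    exact ⟨t, ht, f.symm x, by simpa using hx, by rw [← f.symm_apply_apply y, ← hxy]; simp⟩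

theorem sphereMap_preimage_sphereCap (f : E ≃ₗᵢ[ℝ] E) (v : E) (c : ℝ) :
    f.sphereMap ⁻¹' sphereCap (f v) c = sphereCap v c := by
  ext x
  simp only [sphereCap, mem_preimage, mem_ofPred_eq, sphereMap, f.inner_map_map]

end LinearIsometryEquiv

variable [MeasurableSpace E] [BorelSpace E]

theorem MeasureTheory.MeasurePreserving.toSphere_preimage_sphereMap {μ : Measure E} {f : E ≃ₗᵢ[ℝ] E}
    (hf : MeasurePreserving f μ μ) {S : Set (sphere (0 : E) 1)} (hS : MeasurableSet S) :
    μ.toSphere (f.sphereMap ⁻¹' S) = μ.toSphere S := by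
  rw [μ.toSphere_apply' (f.continuous_sphereMap.measurable hS), μ.toSphere_apply' hS,
    f.image_val_preimage_sphereMap, f.smul_preimage,
    hf.measure_preimage_emb f.toHomeomorph.measurableEmbedding]

theorem toSphere_sphereCap_eq_of_norm_eq [FiniteDimensional ℝ E] {v w : E} (h : ‖v‖ = ‖w‖)
    (c : ℝ) : (volume : Measure E).toSphere (sphereCap v c) = volume.toSphere (sphereCap w c) := by
  obtain ⟨f, rfl⟩ : ∃ f : E ≃ₗᵢ[ℝ] E, f v = w := ⟨_, Submodule.reflection_sub h⟩
  rw [← f.sphereMap_preimage_sphereCap v c,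
    f.measurePreserving.toSphere_preimage_sphereMap (measurableSet_sphereCap _ _)]

end Sphere

theorem exists_div_le_measure_slice {α β : Type*} [MeasurableSpace α] [MeasurableSpace β]
    {μ : Measure α} {ν : Measure β} [IsProbabilityMeasure μ] [IsFiniteMeasure ν] [NeZero ν]
    {A : Set (α × β)} (hA : MeasurableSet A) {m : ℝ≥0∞}
    (hm : ∀ᵐ x ∂μ, ν (Prod.mk x ⁻¹' A) = m) :
    ∃ y, m / ν univ ≤ μ ((·, y) ⁻¹' A) := by
  have hint : ∫⁻ y, μ ((·, y) ⁻¹' A) ∂ν = m := by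
    rw [← Measure.prod_apply_symm hA, Measure.prod_apply hA, lintegral_congr_ae hm,
      lintegral_const, measure_univ, mul_one]
  have hm_ne_top : m ≠ ∞ := by
    obtain ⟨x, hx⟩ := hm.exists
    exact hx ▸ measure_ne_top ν _
  obtain ⟨y, hy⟩ := exists_laverage_le (NeZero.ne ν) (hint ▸ hm_ne_top)
  exact ⟨y, by rwa [laverage_eq, hint] at hy⟩

theorem measuring_argument_general (N : ℕ) (hN : 0 < N) (r : ℝ) (hr : 0 < r)
    (s : ℝ → EuclideanSpace ℝ (Fin N)) (hs : Measurable s)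
    (hnorm : ∀ u ∈ Set.Ico (0:ℝ) 1, ‖s u‖ = r)
    (θ : ℝ)
    (e : EuclideanSpace ℝ (Fin N)) (he : ‖e‖ = 1)
    (σ : Measure (Metric.sphere (0 : EuclideanSpace ℝ (Fin N)) 1))
    (hσ : σ = (volume : Measure (EuclideanSpace ℝ (Fin N))).toSphere) :
    ∃ g : EuclideanSpace ℝ (Fin N), ‖g‖ = 1 ∧
      (σ {x : Metric.sphere (0 : EuclideanSpace ℝ (Fin N)) 1 |
          Real.cos θ ≤ inner ℝ (x : EuclideanSpace ℝ (Fin N)) e}) /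
        (σ (Set.univ : Set (Metric.sphere (0 : EuclideanSpace ℝ (Fin N)) 1))) ≤
      volume {u ∈ Set.Ico (0:ℝ) 1 | r * Real.cos θ ≤ inner ℝ (s u) g} := by
  subst hσ
  have : Nonempty (Fin N) := ⟨⟨0, hN⟩⟩
  have : IsProbabilityMeasure ((volume : Measure ℝ).restrict (Ico 0 1)) := ⟨by simp⟩
  have : NeZero (volume : Measure (EuclideanSpace ℝ (Fin N))).toSphere :=
    ⟨Measure.toSphere_ne_zero _⟩
  set A : Set (ℝ × sphere (0 : EuclideanSpace ℝ (Fin N)) 1) :=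
    {p | r * cos θ ≤ inner ℝ (s p.1) (p.2 : EuclideanSpace ℝ (Fin N))}
  have hA : MeasurableSet A := measurableSet_le measurable_const
    ((hs.comp measurable_fst).inner (continuous_subtype_val.measurable.comp measurable_snd))
  have hslice : ∀ u ∈ Ico (0:ℝ) 1, (volume : Measure (EuclideanSpace ℝ (Fin N))).toSphere
      (Prod.mk u ⁻¹' A) = volume.toSphere (sphereCap e (cos θ)) := by
    intro u hu
    have hsu : ‖s u‖ = ‖r • e‖ := by rw [hnorm u hu, norm_smul, he, mul_one, norm_of_nonneg hr.le]
    rw [← sphereCap_smul hr e, ← toSphere_sphereCap_eq_of_norm_eq hsu]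
    congr 1
    ext x
    simp [A, sphereCap, real_inner_comm]
  obtain ⟨g, hg⟩ := exists_div_le_measure_slice (μ := volume.restrict (Ico 0 1)) hA
    ((ae_restrict_iff' measurableSet_Ico).2 (ae_of_all _ hslice))
  refine ⟨g, norm_eq_of_mem_sphere g, ?_⟩
  rwa [Measure.restrict_apply (measurable_prodMk_right hA), inter_comm] at hg

theorem measuring_argument (N : ℕ) (hN : 0 < N) (r : ℝ) (hr : 0 < r)
    (s : ℝ → EuclideanSpace ℝ (Fin N)) (hs : Measurable s)
    (hnorm : ∀ u ∈ Set.Ico (0:ℝ) 1, ‖s u‖ = r)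
    (θ : ℝ) (hθ : θ ∈ Set.Ioo 0 (π / 2))
    (e : EuclideanSpace ℝ (Fin N)) (he : ‖e‖ = 1)
    (σ : Measure (Metric.sphere (0 : EuclideanSpace ℝ (Fin N)) 1))
    (hσ : σ = (volume : Measure (EuclideanSpace ℝ (Fin N))).toSphere) :
    ∃ g : EuclideanSpace ℝ (Fin N), ‖g‖ = 1 ∧
      (σ {x : Metric.sphere (0 : EuclideanSpace ℝ (Fin N)) 1 |
          Real.cos θ ≤ inner ℝ (x : EuclideanSpace ℝ (Fin N)) e}) /
        (σ (Set.univ : Set (Metric.sphere (0 : EuclideanSpace ℝ (Fin N)) 1))) ≤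
      volume {u ∈ Set.Ico (0:ℝ) 1 | r * Real.cos θ ≤ inner ℝ (s u) g} :=
  measuring_argument_general N hN r hr s hs hnorm θ e he σ hσ
end

section
/- Let Q be a noncentral chi-square random variable with N degrees of freedom and noncentrality parameter λ = NΓ, for Γ > 0. Then for every η with 0 < η ≤ 1 + Γ, P[Q ≤ ηN] ≤ exp(−(N/2)·(η + Γ + log[(√(4ηΓ+1) + 1)/(2η)] − √(4ηΓ+1))). -/
/-!
Chernoff: for `s ≤ 0`, `P[Q ≤ ηN] ≤ e^{-sηN} E[e^{sQ}]`. Completing the square in the Gaussian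
integral gives `E[e^{s(Z+c)²}] = e^{sc²/(1-2s)} / √(1-2s)`, and independence multiplies these,
so with `t = 1 - 2s` the exponent is `-(N/2)(η + Γ + log t - (tη + Γ/t))`. It is optimal at the
positive root `t = (√(4ηΓ+1) + 1)/(2η)` of `ηt² = t + Γ`, where `tη + Γ/t = √(4ηΓ+1)`, and
`η ≤ 1 + Γ` is exactly what makes `t ≥ 1`, i.e. `s ≤ 0`.
-/

open MeasureTheory ProbabilityTheory Real

namespace ProbabilityTheory

lemma mgf_sq_gaussianReal (μ : ℝ) {s : ℝ} (hs : s < 1 / 2) :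
    mgf (fun x ↦ x ^ 2) (gaussianReal μ 1) s = exp (s * μ ^ 2 / (1 - 2 * s)) / √(1 - 2 * s) := by
  have hpos : 0 < 1 - 2 * s := by linarith
  have complete_square : ∀ x, gaussianPDFReal μ 1 x • exp (s * x ^ 2) =
      (√(2 * π))⁻¹ * exp (s * μ ^ 2 / (1 - 2 * s)) *
        exp (-((1 - 2 * s) / 2) * (x - μ / (1 - 2 * s)) ^ 2) := by
    intro x
    rw [gaussianPDFReal, smul_eq_mul, NNReal.coe_one, mul_one, mul_assoc, ← exp_add,
      mul_assoc, ← exp_add]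
    congr 2
    field_simp
    ring
  rw [mgf, integral_gaussianReal_eq_integral_smul one_ne_zero]
  simp_rw [complete_square]
  rw [integral_const_mul, integral_sub_right_eq_self (fun x ↦ exp (-((1 - 2 * s) / 2) * x ^ 2)),
    integral_gaussian, div_div_eq_mul_div, sqrt_div' _ hpos.le, mul_comm π 2]
  field_simp

variable {Ω ι : Type*} [MeasurableSpace Ω] {P : Measure Ω} {s : ℝ}

lemma HasLaw.mgf_sq_of_gaussianReal {Y : Ω → ℝ} {μ : ℝ} (hY : HasLaw Y (gaussianReal μ 1) P)
    (hs : s < 1 / 2) :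
    mgf (fun ω ↦ Y ω ^ 2) P s = exp (s * μ ^ 2 / (1 - 2 * s)) / √(1 - 2 * s) :=
  (hY.integral_comp (f := fun x ↦ exp (s * x ^ 2)) (by fun_prop)).trans (mgf_sq_gaussianReal μ hs)

lemma iIndepFun.mgf_sum_sq_of_gaussianReal [Fintype ι] {Y : ι → Ω → ℝ} (hindep : iIndepFun Y P)
    {m : ι → ℝ} (hY : ∀ i, HasLaw (Y i) (gaussianReal (m i) 1) P) (hs : s < 1 / 2) :
    mgf (fun ω ↦ ∑ i, Y i ω ^ 2) P s
      = exp (s * (∑ i, m i ^ 2) / (1 - 2 * s)) / √(1 - 2 * s) ^ Fintype.card ι := by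
  have hsq : iIndepFun (fun i ω ↦ Y i ω ^ 2) P :=
    hindep.comp₀ (fun _ x ↦ x ^ 2) (fun i ↦ (hY i).aemeasurable) (fun _ ↦ by fun_prop)
  rw [← Finset.sum_fn, hsq.mgf_sum₀ (fun i ↦ (hY i).aemeasurable.pow_const 2) Finset.univ]
  simp_rw [(hY _).mgf_sq_of_gaussianReal hs]
  rw [Finset.prod_div_distrib, ← exp_sum, Finset.prod_const, Finset.card_univ, ← Finset.sum_div,
    ← Finset.mul_sum]

lemma iIndepFun.measureReal_sum_sq_le [Fintype ι] {Y : ι → Ω → ℝ} (hindep : iIndepFun Y P)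
    {m : ι → ℝ} (hY : ∀ i, HasLaw (Y i) (gaussianReal (m i) 1) P) {t : ℝ} (ht : 1 ≤ t) (a : ℝ) :
    P.real {ω | ∑ i, Y i ω ^ 2 ≤ a} ≤ exp (-(1 / 2) * (a + ∑ i, m i ^ 2
      + Fintype.card ι * log t - t * a - (∑ i, m i ^ 2) / t)) := by
  have : IsProbabilityMeasure P := hindep.isProbabilityMeasure
  have ht0 : 0 < t := by linarith
  have hmgf := hindep.mgf_sum_sq_of_gaussianReal hY (s := (1 - t) / 2) (by linarith)
  have hint : Integrable (fun ω ↦ exp ((1 - t) / 2 * ∑ i, Y i ω ^ 2)) P :=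
    mgf_pos_iff.mp <| by
      rw [hmgf]
      exact div_pos (exp_pos _) (pow_pos (sqrt_pos.mpr (by linarith)) _)
  refine (measure_le_le_exp_mul_mgf a (by linarith) hint).trans_eq ?_
  have hsqrt : √t = exp (log t / 2) := by rw [← log_sqrt ht0.le, exp_log (sqrt_pos.mpr ht0)]
  rw [hmgf, show 1 - 2 * ((1 - t) / 2) = t by ring, hsqrt, ← exp_nat_mul, ← exp_sub, ← exp_add]
  congr 1
  field_simp
  ring

end ProbabilityTheory

lemma one_le_sqrt_add_one_div {η Γ : ℝ} (hη : 0 < η) (hηΓ : η ≤ 1 + Γ) :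
    1 ≤ (√(4 * η * Γ + 1) + 1) / (2 * η) := by
  have : 2 * η - 1 ≤ √(4 * η * Γ + 1) :=
    (le_abs_self _).trans (abs_le_sqrt (by nlinarith))
  rw [le_div_iff₀ (by positivity)]
  linarith

lemma mul_add_div_sqrt_add_one_div {η Γ : ℝ} (hη : 0 < η) (hΓ : 0 ≤ Γ) :
    (√(4 * η * Γ + 1) + 1) / (2 * η) * η + Γ / ((√(4 * η * Γ + 1) + 1) / (2 * η))
      = √(4 * η * Γ + 1) := by
  have hR := sq_sqrt (show 0 ≤ 4 * η * Γ + 1 by positivity)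
  have : 0 < √(4 * η * Γ + 1) + 1 := by positivity
  field_simp
  linear_combination -hR

theorem noncentral_chi_square_lower_tail_general
    {Ω : Type*} [MeasurableSpace Ω] (P : Measure Ω) [IsProbabilityMeasure P]
    (N : ℕ) (Γ : ℝ) (hΓ : 0 < Γ)
    (X : Fin N → Ω → ℝ)
    (hmeas : ∀ i, Measurable (X i))
    (hindep : iIndepFun X P)
    (hgauss : ∀ i, Measure.map (X i) P = gaussianReal 0 1)
    (m : Fin N → ℝ) (hm : ∑ i, (m i) ^ 2 = N * Γ)
    (Q : Ω → ℝ) (hQ : ∀ ω, Q ω = ∑ i, (X i ω + m i) ^ 2)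
    (η : ℝ) (hη0 : 0 < η) (hη1 : η ≤ 1 + Γ) :
    P {ω | Q ω ≤ η * N} ≤ ENNReal.ofReal (Real.exp (-(N / 2) *
      (η + Γ + Real.log ((Real.sqrt (4 * η * Γ + 1) + 1) / (2 * η))
        - Real.sqrt (4 * η * Γ + 1)))) := by
  have hY : ∀ i, HasLaw (fun ω ↦ X i ω + m i) (gaussianReal (m i) 1) P := fun i ↦ by
    simpa using gaussianReal_add_const ⟨(hmeas i).aemeasurable, hgauss i⟩ (m i)
  have hindepY : iIndepFun (fun i ω ↦ X i ω + m i) P :=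
    hindep.comp (fun i x ↦ x + m i) (fun _ ↦ by fun_prop)
  have hbound := hindepY.measureReal_sum_sq_le hY (one_le_sqrt_add_one_div hη0 hη1) (η * N)
  have hopt := mul_add_div_sqrt_add_one_div hη0 hΓ.le
  rw [hm, Fintype.card_fin] at hbound
  simp_rw [hQ]
  rw [ENNReal.le_ofReal_iff_toReal_le (measure_ne_top _ _) (exp_pos _).le]
  refine hbound.trans_eq (congrArg exp ?_)
  linear_combination (N / 2 : ℝ) * hopt

theorem noncentral_chi_square_lower_tail
    {Ω : Type*} [MeasurableSpace Ω] (P : Measure Ω) [IsProbabilityMeasure P]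
    (N : ℕ) (hN : 0 < N) (Γ : ℝ) (hΓ : 0 < Γ)
    (X : Fin N → Ω → ℝ)
    (hmeas : ∀ i, Measurable (X i))
    (hindep : iIndepFun X P)
    (hgauss : ∀ i, Measure.map (X i) P = gaussianReal 0 1)
    (m : Fin N → ℝ) (hm : ∑ i, (m i) ^ 2 = N * Γ)
    (Q : Ω → ℝ) (hQ : ∀ ω, Q ω = ∑ i, (X i ω + m i) ^ 2)
    (η : ℝ) (hη0 : 0 < η) (hη1 : η ≤ 1 + Γ) :
    P {ω | Q ω ≤ η * N} ≤ ENNReal.ofReal (Real.exp (-(N / 2) *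
      (η + Γ + Real.log ((Real.sqrt (4 * η * Γ + 1) + 1) / (2 * η))
        - Real.sqrt (4 * η * Γ + 1)))) :=
  noncentral_chi_square_lower_tail_general P N Γ hΓ X hmeas hindep hgauss m hm Q hQ η hη0 hη1
end

section
/- Fix ρ > 0 and define E₀(ρ,Γ) = (1/2)[(1−β₀)(1+ρ) + Γ + log(β₀ − Γ/(1+ρ)) + ρ·log β₀] with β₀ as in Gallager's formula. Then as Γ → 0⁺, E₀(ρ,Γ) = (1/2)·(ρ/(1+ρ))·Γ + O(Γ²). -/
/-!
At `Γ = 0` both logarithms and the square root in Gallager's formula have argument `1`, so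
`E₀(ρ, ·)` is smooth there, with `β₀(0) = 1`, `E₀(ρ, 0) = 0` and slope `ρ / (2 (1 + ρ))`.
The `O(Γ²)` remainder is then the second-order Taylor bound for a `C²` function, obtained from the
mean value inequality applied to its derivative, which is Lipschitz at the base point.
-/

open Filter Asymptotics

open Topology Metric

theorem ContDiffAt.isBigO_sub_sub_fderiv {E F : Type*} [NormedAddCommGroup E] [NormedSpace ℝ E]
    [NormedAddCommGroup F] [NormedSpace ℝ F] {f : E → F} {a : E} (hf : ContDiffAt ℝ 2 f a) :
    (fun x => f x - f a - fderiv ℝ f a (x - a)) =O[𝓝 a] fun x => ‖x - a‖ ^ 2 := by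
  obtain ⟨f', ⟨u, hu, hf'⟩, hf'_smooth⟩ := contDiffAt_succ_iff_hasFDerivAt (n := 1).mp hf
  rw [(hf' a (mem_of_mem_nhds hu)).fderiv]
  obtain ⟨C, hC, hf'_lip⟩ := (hf'_smooth.differentiableAt one_ne_zero).isBigO_sub.exists_pos
  obtain ⟨δ, hδ, hball⟩ := eventually_nhds_iff_ball.mp (hf'_lip.bound.and hu)
  refine isBigO_iff.mpr ⟨C, ?_⟩
  filter_upwards [ball_mem_nhds a hδ] with x hx
  have hsub : closedBall a ‖x - a‖ ⊆ ball a δ :=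
    closedBall_subset_ball (by rwa [mem_ball, dist_eq_norm] at hx)
  have hmvt := (convex_closedBall a ‖x - a‖).norm_image_sub_le_of_norm_hasFDerivWithin_le'
    (C := C * ‖x - a‖)
    (fun y hy => (hf' y (hball y (hsub hy)).2).hasFDerivWithinAt)
    (fun y hy => (hball y (hsub hy)).1.trans (by gcongr; rwa [mem_closedBall, dist_eq_norm] at hy))
    (mem_closedBall_self (norm_nonneg _)) (by rw [mem_closedBall, dist_eq_norm])
  rwa [norm_pow, norm_norm, sq, ← mul_assoc]

noncomputable def gallagerBeta (ρ Γ : ℝ) : ℝ :=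
  1 / 2 * (1 + Γ / (1 + ρ)) * (1 + Real.sqrt (1 - 4 * Γ * ρ / (1 + ρ + Γ) ^ 2))

noncomputable def gallagerE0 (ρ Γ : ℝ) : ℝ :=
  1 / 2 * ((1 - gallagerBeta ρ Γ) * (1 + ρ) + Γ + Real.log (gallagerBeta ρ Γ - Γ / (1 + ρ)) +
    ρ * Real.log (gallagerBeta ρ Γ))

section Gallager

variable {ρ : ℝ}

theorem gallagerBeta_zero : gallagerBeta ρ 0 = 1 := by
  norm_num [gallagerBeta]

theorem gallagerE0_zero : gallagerE0 ρ 0 = 0 := by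
  simp [gallagerE0, gallagerBeta_zero]

theorem contDiffAt_gallagerBeta_zero (hρ : 1 + ρ ≠ 0) {n : WithTop ℕ∞} :
    ContDiffAt ℝ n (gallagerBeta ρ) 0 := by
  have hq : ContDiffAt ℝ n (fun Γ : ℝ => 1 - 4 * Γ * ρ / (1 + ρ + Γ) ^ 2) 0 :=
    contDiffAt_const.sub <| (by fun_prop : ContDiffAt ℝ n (fun Γ : ℝ => 4 * Γ * ρ) 0).div
      (by fun_prop) (by simpa using hρ)
  exact (by fun_prop : ContDiffAt ℝ n (fun Γ : ℝ => 1 / 2 * (1 + Γ / (1 + ρ))) 0).mul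
    (contDiffAt_const.add (hq.sqrt (by simp)))

theorem hasDerivAt_gallagerBeta_zero (hρ : 1 + ρ ≠ 0) :
    HasDerivAt (gallagerBeta ρ) (1 / (1 + ρ) ^ 2) 0 := by
  have hq : HasDerivAt (fun Γ : ℝ => 1 - 4 * Γ * ρ / (1 + ρ + Γ) ^ 2)
      (-(4 * ρ / (1 + ρ) ^ 2)) 0 :=
    (((((hasDerivAt_id' 0).const_mul 4).mul_const ρ).fun_div
      (((hasDerivAt_id' 0).const_add (1 + ρ)).fun_pow 2) (by simpa using hρ)).const_sub 1)
      |>.congr_deriv (by simp only [add_zero, mul_zero, zero_mul, sub_zero, mul_one]; field_simp)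
  exact ((((hasDerivAt_id' 0).div_const (1 + ρ)).const_add 1).const_mul (1 / 2)).fun_mul
    ((hq.sqrt (by simp)).const_add 1) |>.congr_deriv (by field_simp; norm_num; ring)

theorem contDiffAt_gallagerE0_zero (hρ : 1 + ρ ≠ 0) {n : WithTop ℕ∞} :
    ContDiffAt ℝ n (gallagerE0 ρ) 0 := by
  have hβ : ContDiffAt ℝ n (gallagerBeta ρ) 0 := contDiffAt_gallagerBeta_zero hρ
  have hlog₁ : ContDiffAt ℝ n (fun Γ => Real.log (gallagerBeta ρ Γ - Γ / (1 + ρ))) 0 :=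
    (hβ.sub (contDiffAt_id.div_const _)).log (by simp [gallagerBeta_zero])
  have hlog₂ : ContDiffAt ℝ n (fun Γ => Real.log (gallagerBeta ρ Γ)) 0 :=
    hβ.log (by simp [gallagerBeta_zero])
  unfold gallagerE0
  exact contDiffAt_const.mul
    ((((contDiffAt_const.sub hβ).mul contDiffAt_const).add contDiffAt_id).add hlog₁
      |>.add (contDiffAt_const.mul hlog₂))

theorem hasDerivAt_gallagerE0_zero (hρ : 1 + ρ ≠ 0) :
    HasDerivAt (gallagerE0 ρ) (1 / 2 * (ρ / (1 + ρ))) 0 := by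
  have hβ := hasDerivAt_gallagerBeta_zero hρ
  have hlog₁ := (hβ.fun_sub ((hasDerivAt_id' 0).div_const (1 + ρ))).log
    (by simp [gallagerBeta_zero])
  have hlog₂ := (hβ.log (by simp [gallagerBeta_zero])).const_mul ρ
  refine ((((hβ.const_sub 1).mul_const (1 + ρ)).add (hasDerivAt_id' 0)).add hlog₁ |>.add hlog₂
    |>.const_mul (1 / 2)).congr_deriv ?_
  simp only [gallagerBeta_zero]
  field_simp
  ring

end Gallager

theorem E0_low_snr (ρ : ℝ) (hρ : 0 < ρ)
    (β₀ : ℝ → ℝ) (hβ : ∀ Γ, β₀ Γ = (1 / 2) * (1 + Γ / (1 + ρ)) *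
      (1 + Real.sqrt (1 - 4 * Γ * ρ / (1 + ρ + Γ) ^ 2)))
    (E₀ : ℝ → ℝ) (hE : ∀ Γ, E₀ Γ = (1 / 2) * ((1 - β₀ Γ) * (1 + ρ) + Γ +
      Real.log (β₀ Γ - Γ / (1 + ρ)) + ρ * Real.log (β₀ Γ))) :
    (fun Γ => E₀ Γ - (1 / 2) * (ρ / (1 + ρ)) * Γ) =O[nhdsWithin 0 (Set.Ioi 0)]
      (fun Γ : ℝ => Γ ^ 2) := by
  have hρ' : 1 + ρ ≠ 0 := by positivity
  have hE₀ : E₀ = gallagerE0 ρ := funext fun Γ => by simp only [hE, hβ, gallagerE0, gallagerBeta]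
  have htaylor := (contDiffAt_gallagerE0_zero hρ' (n := 2)).isBigO_sub_sub_fderiv
  rw [(hasDerivAt_gallagerE0_zero hρ').hasFDerivAt.fderiv, gallagerE0_zero] at htaylor
  refine (htaylor.mono nhdsWithin_le_nhds).congr (fun Γ => ?_) (fun Γ => ?_)
  · simp only [hE₀, sub_zero, ContinuousLinearMap.toSpanSingleton_apply, smul_eq_mul]
    ring
  · simp
end
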